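/- Let X be a real Hilbert space, a : X × X → ℝ a bounded coercive bilinear form with constants M and α. For u ∈ X denote by Pu ∈ V (V a closed subspace) the unique element with a(u − Pu, v) = 0 for all v ∈ V. Suppose additionally that for the adjoint problem one has the approximation property: for every φ ∈ H (a Hilbert space in which X embeds continuously with ‖x‖_H ≤ C₀‖x‖_X), the solution w ∈ X of a(v, w) = ⟨v, φ⟩_H for all v ∈ X satisfies inf_{v ∈ V} ‖w − v‖_X ≤ C₁ h ‖φ‖_H. Then ‖u − Pu‖_H ≤ M C₁ h ‖u − Pu‖_X. -/
import Mathlib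


open RealInnerProductSpace

/-- Abstract Aubin–Nitsche duality lemma: with `X ↪ H` continuously (`‖ιx‖_H ≤ C₀‖x‖_X`),
`a` bounded (constant `M`) and coercive (constant `α`) on `X`, `Pu ∈ V` the Galerkin
projection of `u` onto the closed subspace `V`, and the adjoint approximation property
`inf_{v ∈ V} ‖w - v‖_X ≤ C₁ h ‖φ‖_H` for the solution `w` of `a(v,w) = ⟨v,φ⟩_H`, one has
`‖u - Pu‖_H ≤ M C₁ h ‖u - Pu‖_X`. -/
theorem stmt_7 {X H : Type*}
    [NormedAddCommGroup X] [InnerProductSpace ℝ X] [CompleteSpace X]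
    [NormedAddCommGroup H] [InnerProductSpace ℝ H] [CompleteSpace H]
    (ι : X →L[ℝ] H) (C₀ : ℝ) (hι : ∀ x : X, ‖ι x‖ ≤ C₀ * ‖x‖)
    (a : X →L[ℝ] X →L[ℝ] ℝ) (M α : ℝ) (hα : 0 < α)
    (hbound : ∀ u v : X, |a u v| ≤ M * ‖u‖ * ‖v‖)
    (hcoer : ∀ v : X, α * ‖v‖ ^ 2 ≤ a v v)
    (V : Submodule ℝ X) (hV : IsClosed (V : Set X))
    (C₁ h : ℝ) (hC₁ : 0 ≤ C₁) (hh : 0 ≤ h)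
    (hadjoint : ∀ φ : H, ∃ w : X, (∀ v : X, a v w = ⟪ι v, φ⟫) ∧
      (⨅ v : V, ‖w - (v : X)‖) ≤ C₁ * h * ‖φ‖)
    (u Pu : X) (hPu : Pu ∈ V)
    (hGalerkin : ∀ v ∈ V, a (u - Pu) v = 0) :
    ‖ι (u - Pu)‖ ≤ M * C₁ * h * ‖u - Pu‖ := by

  set e := u - Pu with he
  by_cases hne : e = 0
  · simp [hne]
  have hnorm : (0:ℝ) < ‖e‖ := norm_pos_iff.mpr hne
  have hM : 0 < M := by
    have h1 := hcoer e
    have h2 := hbound e e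
    have h3 : α * ‖e‖ ^ 2 ≤ M * ‖e‖ * ‖e‖ := h1.trans ((le_abs_self _).trans h2)
    nlinarith [mul_pos hα (pow_pos hnorm 2)]
  set φ := ι e with hφ
  by_cases hφ0 : ‖φ‖ = 0
  · rw [hφ0]; positivity
  have hφpos : (0:ℝ) < ‖φ‖ := lt_of_le_of_ne (norm_nonneg _) (Ne.symm hφ0)
  obtain ⟨w, hw, hinf⟩ := hadjoint φ
  -- key inequality: ‖φ‖^2 ≤ M * ‖e‖ * ‖w - v‖ for all v ∈ V
  have key : ∀ v : V, ‖φ‖ ^ 2 ≤ M * ‖e‖ * ‖w - (v : X)‖ := by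
    intro v
    have h1 : a e (w - v) = ‖φ‖ ^ 2 := by
      have : a e w = ⟪φ, φ⟫ := hw e
      have h2 : a e (v : X) = 0 := hGalerkin v v.2
      rw [map_sub, this, h2, real_inner_self_eq_norm_sq]
      ring
    calc ‖φ‖ ^ 2 = a e (w - v) := h1.symm
      _ ≤ |a e (w - v)| := le_abs_self _
      _ ≤ M * ‖e‖ * ‖w - (v : X)‖ := hbound e _
  have hle : ‖φ‖ ^ 2 ≤ M * ‖e‖ * ⨅ v : V, ‖w - (v : X)‖ := by
    have hpos : 0 < M * ‖e‖ := by positivity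
    rw [show M * ‖e‖ * ⨅ v : V, ‖w - (v : X)‖ = ⨅ v : V, M * ‖e‖ * ‖w - (v : X)‖ from ?_]
    · exact le_ciInf key
    · haveI : Nonempty V := ⟨0, V.zero_mem⟩
      exact (Real.mul_iInf_of_nonneg hpos.le _)
  have hfinal : ‖φ‖ ^ 2 ≤ M * ‖e‖ * (C₁ * h * ‖φ‖) := by
    refine hle.trans ?_
    exact mul_le_mul_of_nonneg_left hinf (by positivity)
  have : ‖φ‖ ≤ M * ‖e‖ * (C₁ * h) := by nlinarith
  calc ‖φ‖ ≤ M * ‖e‖ * (C₁ * h) := this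
    _ = M * C₁ * h * ‖e‖ := by ring
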